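/- arXiv:2009.04709 — 6 statements merged into one kernel-verified Lean document; each statement's English description precedes it below -/
import Mathlib

section
/- Let E be a real inner product space and C a class set. A linear multiclass classifier is given by weights W : C → E and biases b : C → ℝ, with logits logit_c(v) = ⟪W_c, v⟫ + b_c. Fix x ∈ E and classes y, c with logit_y(x) ≥ logit_c(x) and W_y ≠ W_c. Then the infimum of ‖δ‖ over all δ ∈ E with logit_c(x + δ) ≥ logit_y(x + δ) equals (logit_y(x) − logit_c(x)) / ‖W_y − W_c‖. (This is the per-class robustness magnitude |ρ(x)_c| of Lemma 1.) -/
open RealInnerProductSpace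

/-!
Class `c` overtakes class `y` at `x + δ` exactly when `⟪W y - W c, δ⟫ ≤ -(logit_y x - logit_c x)`,
so the quantity is the distance from the origin to a half-space. Cauchy–Schwarz bounds it below
by the margin over `‖W y - W c‖`, and the multiple of `W y - W c` that lands on the boundary
hyperplane attains that bound.
-/

section HalfSpace

variable {E : Type*} [NormedAddCommGroup E] [InnerProductSpace ℝ E]

lemma div_norm_le_norm_of_inner_le_neg {w δ : E} {g : ℝ} (hw : w ≠ 0) (hδ : ⟪w, δ⟫ ≤ -g) :
    g / ‖w‖ ≤ ‖δ‖ := by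
  have hcs : -⟪w, δ⟫ ≤ ‖w‖ * ‖δ‖ := by
    simpa [inner_neg_right] using real_inner_le_norm w (-δ)
  rw [div_le_iff₀ (norm_pos_iff.mpr hw)]
  linarith

lemma inner_neg_div_norm_sq_smul_self {w : E} (hw : w ≠ 0) (g : ℝ) :
    ⟪w, (-(g / ‖w‖ ^ 2)) • w⟫ = -g := by
  have : ‖w‖ ≠ 0 := norm_ne_zero_iff.mpr hw
  rw [real_inner_smul_right, real_inner_self_eq_norm_sq]
  field_simp

lemma norm_neg_div_norm_sq_smul_self {w : E} (hw : w ≠ 0) {g : ℝ} (hg : 0 ≤ g) :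
    ‖(-(g / ‖w‖ ^ 2)) • w‖ = g / ‖w‖ := by
  have : ‖w‖ ≠ 0 := norm_ne_zero_iff.mpr hw
  rw [norm_smul, norm_neg, Real.norm_of_nonneg (by positivity)]
  field_simp

lemma isLeast_norm_of_inner_le_neg {w : E} (hw : w ≠ 0) {g : ℝ} (hg : 0 ≤ g) :
    IsLeast {r : ℝ | ∃ δ : E, ⟪w, δ⟫ ≤ -g ∧ ‖δ‖ = r} (g / ‖w‖) :=
  ⟨⟨_, (inner_neg_div_norm_sq_smul_self hw g).le, norm_neg_div_norm_sq_smul_self hw hg⟩,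
    fun _ ⟨_, hδ, hr⟩ => hr ▸ div_norm_le_norm_of_inner_le_neg hw hδ⟩

end HalfSpace

/-- Per-class robustness magnitude `|ρ(x)_c|` of Lemma 1: for a linear multiclass
classifier with logits `logit_c v = ⟪W c, v⟫ + b c`, the distance from `x` to the set
of perturbed points where class `c` scores at least class `y`. -/
theorem perClass_robustness {E C : Type*} [NormedAddCommGroup E] [InnerProductSpace ℝ E]
    (W : C → E) (b : C → ℝ) (x : E) (y c : C)
    (h : ⟪W y, x⟫ + b y ≥ ⟪W c, x⟫ + b c) (hW : W y ≠ W c) :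
    sInf {r : ℝ | ∃ δ : E, ⟪W c, x + δ⟫ + b c ≥ ⟪W y, x + δ⟫ + b y ∧ ‖δ‖ = r}
      = ((⟪W y, x⟫ + b y) - (⟪W c, x⟫ + b c)) / ‖W y - W c‖ := by
  have overtakes_iff : ∀ δ : E, ⟪W c, x + δ⟫ + b c ≥ ⟪W y, x + δ⟫ + b y ↔
      ⟪W y - W c, δ⟫ ≤ -((⟪W y, x⟫ + b y) - (⟪W c, x⟫ + b c)) := by
    intro δ
    simp only [inner_add_right, inner_sub_left]
    constructor <;> intro _ <;> linarith
  simp_rw [overtakes_iff]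
  exact (isLeast_norm_of_inner_le_neg (sub_ne_zero.mpr hW) (sub_nonneg.mpr h)).csInf_eq
end

section
/- Let E be a real inner product space and C a finite class set. A linear multiclass classifier is given by weights W : C → E and biases b : C → ℝ, with logits logit_c(v) = ⟪W_c, v⟫ + b_c. Fix x ∈ E and a class y such that there exists at least one class c ≠ y, and assume for every class c ≠ y that logit_y(x) > logit_c(x) (x is classified as y) and W_c ≠ W_y. Then the robustness magnitude at x, namely the infimum of ‖δ‖ over all δ ∈ E for which there exists a class c ≠ y with logit_c(x + δ) ≥ logit_y(x + δ), equals the minimum over classes c ≠ y of (logit_y(x) − logit_c(x)) / ‖W_y − W_c‖. (Lemma 1: for a locally linear model the robustness is the minimum of the pairwise boundary distances.) -/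
open RealInnerProductSpace

/-!
Crossing into the region of class `c` means `⟪W c - W y, δ⟫ ≥ logit_y x - logit_c x`, a half-space
whose nearest point to the origin, by Cauchy–Schwarz, is the multiple of `W c - W y` at distance
`(logit_y x - logit_c x) / ‖W c - W y‖`. The set of adversarial norms is the finite union of these
half-space norm sets, so its least element is the least of their least elements.
-/

theorem IsLeast.iUnion_ciInf {α ι : Type*} [ConditionallyCompleteLinearOrder α] [Finite ι]
    [Nonempty ι] {S : ι → Set α} {a : ι → α} (h : ∀ i, IsLeast (S i) (a i)) :
    IsLeast (⋃ i, S i) (⨅ i, a i) := by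
  obtain ⟨i₀, hi₀⟩ := exists_eq_ciInf_of_finite (f := a)
  refine ⟨Set.mem_iUnion.2 ⟨i₀, hi₀ ▸ (h i₀).1⟩, ?_⟩
  rintro r ⟨_, ⟨i, rfl⟩, hr⟩
  exact (ciInf_le (Finite.bddBelow_range a) i).trans ((h i).2 hr)

section Halfspace

variable {E : Type*} [NormedAddCommGroup E] [InnerProductSpace ℝ E]

theorem div_norm_le_norm_of_le_inner {w δ : E} {g : ℝ} (hw : w ≠ 0) (h : g ≤ ⟪w, δ⟫) :
    g / ‖w‖ ≤ ‖δ‖ := by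
  rw [div_le_iff₀ (norm_pos_iff.2 hw), mul_comm]
  exact h.trans (real_inner_le_norm w δ)

theorem isLeast_norm_of_le_inner {w : E} {g : ℝ} (hw : w ≠ 0) (hg : 0 ≤ g) :
    IsLeast {r | ∃ δ : E, g ≤ ⟪w, δ⟫ ∧ ‖δ‖ = r} (g / ‖w‖) := by
  have hw' : 0 < ‖w‖ := norm_pos_iff.2 hw
  refine ⟨⟨(g / ‖w‖ ^ 2) • w, ?_, ?_⟩, ?_⟩
  · rw [real_inner_smul_right, real_inner_self_eq_norm_sq, div_mul_cancel₀ _ (by positivity)]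
  · rw [norm_smul, Real.norm_of_nonneg (by positivity)]
    field_simp
  · rintro _ ⟨δ, h, rfl⟩
    exact div_norm_le_norm_of_le_inner hw h

end Halfspace

/-- Lemma 1: for a locally linear multiclass model with logits
`logit_c v = ⟪W c, v⟫ + b c`, if `x` is classified as `y`, then the robustness
magnitude at `x` equals the minimum over classes `c ≠ y` of the pairwise boundary
distances `(logit_y x − logit_c x) / ‖W y − W c‖`. -/
theorem lemma1_robustness_min {E C : Type*} [NormedAddCommGroup E] [InnerProductSpace ℝ E]
    [Fintype C] (W : C → E) (b : C → ℝ) (x : E) (y : C)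
    (hne : ∃ c : C, c ≠ y)
    (hclass : ∀ c : C, c ≠ y → ⟪W y, x⟫ + b y > ⟪W c, x⟫ + b c)
    (hW : ∀ c : C, c ≠ y → W c ≠ W y) :
    sInf {r : ℝ | ∃ δ : E, (∃ c : C, c ≠ y ∧ ⟪W c, x + δ⟫ + b c ≥ ⟪W y, x + δ⟫ + b y)
        ∧ ‖δ‖ = r}
      = ⨅ c : {c : C // c ≠ y},
          ((⟪W y, x⟫ + b y) - (⟪W c.1, x⟫ + b c.1)) / ‖W y - W c.1‖ := by
  obtain ⟨c₀, hc₀⟩ := hne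
  have : Nonempty {c : C // c ≠ y} := ⟨⟨c₀, hc₀⟩⟩
  have hunion : {r : ℝ | ∃ δ : E, (∃ c : C, c ≠ y ∧ ⟪W c, x + δ⟫ + b c ≥ ⟪W y, x + δ⟫ + b y)
      ∧ ‖δ‖ = r} = ⋃ c : {c : C // c ≠ y}, {r | ∃ δ : E,
        (⟪W y, x⟫ + b y) - (⟪W c.1, x⟫ + b c.1) ≤ ⟪W c.1 - W y, δ⟫ ∧ ‖δ‖ = r} := by
    ext r
    simp only [Set.mem_ofPred_eq, Set.mem_iUnion, Subtype.exists, inner_add_right, inner_sub_left]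
    constructor
    · rintro ⟨δ, ⟨c, hc, hge⟩, rfl⟩
      exact ⟨c, hc, δ, by linarith, rfl⟩
    · rintro ⟨c, hc, δ, hle, rfl⟩
      exact ⟨δ, ⟨c, hc, by linarith⟩, rfl⟩
  have hleast := IsLeast.iUnion_ciInf fun c : {c : C // c ≠ y} ↦
    isLeast_norm_of_le_inner (sub_ne_zero.2 (hW c.1 c.2)) (sub_nonneg.2 (hclass c.1 c.2).le)
  simp only [norm_sub_rev (W _ : E) (W y)] at hleast
  rw [hunion, hleast.csInf_eq]
end

section
/- Let E be a real inner product space, w ∈ E with w ≠ 0, and b ∈ ℝ, defining a binary linear classifier logit_b(v) = ⟪w, v⟫ + b. Define the signed robustness for a point with ground truth negative class by ρ₋(x) = inf{‖δ‖ : ⟪w, x + δ⟫ + b ≥ 0} if ⟪w, x⟫ + b ≤ 0, and ρ₋(x) = −inf{‖δ‖ : ⟪w, x + δ⟫ + b ≤ 0} otherwise; and for a point with ground truth positive class by ρ₊(x) = inf{‖δ‖ : ⟪w, x + δ⟫ + b ≤ 0} if ⟪w, x⟫ + b ≥ 0, and ρ₊(x) = −inf{‖δ‖ : ⟪w, x +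 δ⟫ + b ≥ 0} otherwise. Then for any x_i, x_j ∈ E with x_i ≠ x_j (x_i of ground truth negative class, x_j of ground truth positive class), ρ₋(x_i) + ρ₊(x_j) = ‖x_j − x_i‖ · sim(x_j − x_i, w). (Theorem 1 in full, including misclassified inputs via negative robustness.) -/
open RealInnerProductSpace

/-- Signed robustness of a point whose ground truth is the negative class
(`⟪w, ·⟫ + b < 0`): distance to the set where the classifier outputs the positive
class, with a negative sign when the point is misclassified. -/
noncomputable def rhoNeg {E : Type*} [NormedAddCommGroup E] [InnerProductSpace ℝ E]
    (w : E) (b : ℝ) (x : E) : ℝ :=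
  if ⟪w, x⟫ + b ≤ 0 then
    sInf {r : ℝ | ∃ δ : E, ⟪w, x + δ⟫ + b ≥ 0 ∧ ‖δ‖ = r}
  else
    -sInf {r : ℝ | ∃ δ : E, ⟪w, x + δ⟫ + b ≤ 0 ∧ ‖δ‖ = r}

/-- Signed robustness of a point whose ground truth is the positive class
(`⟪w, ·⟫ + b > 0`): distance to the set where the classifier outputs the negative
class, with a negative sign when the point is misclassified. -/
noncomputable def rhoPos {E : Type*} [NormedAddCommGroup E] [InnerProductSpace ℝ E]
    (w : E) (b : ℝ) (x : E) : ℝ :=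
  if ⟪w, x⟫ + b ≥ 0 then
    sInf {r : ℝ | ∃ δ : E, ⟪w, x + δ⟫ + b ≤ 0 ∧ ‖δ‖ = r}
  else
    -sInf {r : ℝ | ∃ δ : E, ⟪w, x + δ⟫ + b ≥ 0 ∧ ‖δ‖ = r}

/-!
For a linear classifier, both signed robustnesses are the signed distance to the decision
hyperplane: `ρ₋(x) = -(⟪w, x⟫ + b) / ‖w‖` and `ρ₊(x) = (⟪w, x⟫ + b) / ‖w‖`, whichever side `x`
lies on. In the sum the bias cancels, leaving `⟪w, x_j - x_i⟫ / ‖w‖`.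
-/

section

variable {E : Type*} [NormedAddCommGroup E] [InnerProductSpace ℝ E]

/-- The infimum is attained at `(c / ‖w‖ ^ 2) • w`; Cauchy–Schwarz gives the lower bound. -/
theorem sInf_norm_of_le_inner {w : E} (hw : w ≠ 0) {c : ℝ} (hc : 0 ≤ c) :
    sInf {r : ℝ | ∃ δ : E, c ≤ ⟪w, δ⟫ ∧ ‖δ‖ = r} = c / ‖w‖ := by
  have hw₀ : 0 < ‖w‖ := norm_pos_iff.mpr hw
  have hmem : c / ‖w‖ ∈ {r : ℝ | ∃ δ : E, c ≤ ⟪w, δ⟫ ∧ ‖δ‖ = r} := by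
    refine ⟨(c / ‖w‖ ^ 2) • w, ?_, ?_⟩
    · rw [inner_smul_right, real_inner_self_eq_norm_sq, div_mul_cancel₀ _ (by positivity)]
    · rw [norm_smul, Real.norm_of_nonneg (by positivity)]
      field_simp
  refine le_antisymm (csInf_le ⟨0, ?_⟩ hmem) (le_csInf ⟨_, hmem⟩ ?_)
  · rintro r ⟨δ, -, rfl⟩
    exact norm_nonneg δ
  · rintro r ⟨δ, hδ, rfl⟩
    rw [div_le_iff₀ hw₀, mul_comm]
    exact hδ.trans (real_inner_le_norm w δ)

theorem sInf_norm_of_inner_add_nonneg {w : E} (hw : w ≠ 0) {b : ℝ} {x : E}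
    (hx : ⟪w, x⟫ + b ≤ 0) :
    sInf {r : ℝ | ∃ δ : E, ⟪w, x + δ⟫ + b ≥ 0 ∧ ‖δ‖ = r} = -(⟪w, x⟫ + b) / ‖w‖ := by
  rw [← sInf_norm_of_le_inner hw (neg_nonneg.mpr hx)]
  congr 1
  ext r
  refine exists_congr fun δ => and_congr_left fun _ => ?_
  rw [inner_add_right]
  constructor <;> intro <;> linarith

theorem sInf_norm_of_inner_add_nonpos {w : E} (hw : w ≠ 0) {b : ℝ} {x : E}
    (hx : 0 ≤ ⟪w, x⟫ + b) :
    sInf {r : ℝ | ∃ δ : E, ⟪w, x + δ⟫ + b ≤ 0 ∧ ‖δ‖ = r} = (⟪w, x⟫ + b) / ‖w‖ := by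
  rw [← norm_neg w, ← sInf_norm_of_le_inner (neg_ne_zero.mpr hw) hx]
  congr 1
  ext r
  refine exists_congr fun δ => and_congr_left fun _ => ?_
  rw [inner_add_right, inner_neg_left]
  constructor <;> intro <;> linarith

theorem rhoNeg_eq {w : E} (hw : w ≠ 0) (b : ℝ) (x : E) :
    rhoNeg w b x = -(⟪w, x⟫ + b) / ‖w‖ := by
  unfold rhoNeg
  split_ifs with hx
  · exact sInf_norm_of_inner_add_nonneg hw hx
  · rw [sInf_norm_of_inner_add_nonpos hw (by linarith), neg_div]

theorem rhoPos_eq {w : E} (hw : w ≠ 0) (b : ℝ) (x : E) :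
    rhoPos w b x = (⟪w, x⟫ + b) / ‖w‖ := by
  unfold rhoPos
  split_ifs with hx
  · exact sInf_norm_of_inner_add_nonpos hw hx
  · rw [sInf_norm_of_inner_add_nonneg hw (by linarith), neg_div, neg_neg]

theorem norm_mul_cosine_similarity {v : E} (hv : v ≠ 0) (w : E) :
    ‖v‖ * (⟪v, w⟫ / (‖v‖ * ‖w‖)) = ⟪v, w⟫ / ‖w‖ := by
  have : ‖v‖ ≠ 0 := norm_ne_zero_iff.mpr hv
  field_simp

end

/-- Theorem 1 in full, including misclassified inputs via negative robustness:
for any `x_i` of ground truth negative class and `x_j` of ground truth positive class,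
`ρ₋(x_i) + ρ₊(x_j) = ‖x_j − x_i‖ · sim(x_j − x_i, w)`. -/
theorem theorem1_full {E : Type*} [NormedAddCommGroup E] [InnerProductSpace ℝ E]
    (w : E) (hw : w ≠ 0) (b : ℝ) (xi xj : E) (hne : xi ≠ xj) :
    rhoNeg w b xi + rhoPos w b xj
      = ‖xj - xi‖ * (⟪xj - xi, w⟫ / (‖xj - xi‖ * ‖w‖)) := by
  rw [rhoNeg_eq hw, rhoPos_eq hw, norm_mul_cosine_similarity (sub_ne_zero.mpr hne.symm),
    inner_sub_left, real_inner_comm xj, real_inner_comm xi]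
  ring
end

section
/- Let E be a real normed vector space with its Borel σ-algebra, μ a probability measure on E, and A, B disjoint measurable subsets with μ(A) + μ(B) = 1. Let T : E → E be measurable with (μ restricted to A) pushed forward by T equal to μ restricted to B (a measure-preserving pairing between the supports of the two classes). Let ρ, α : E → ℝ be μ-integrable, and let d₁ ≥ 0. Assume for every x ∈ A: (i) ρ(x) + ρ(T x) = ‖T x − x‖ · α(x); (ii) α(T x) = α(x); (iii) α(x) ≥ 0; (iv) ‖T x − x‖ ≥ d₁. Then the expected robustness satisfies ∫ ρ dμ ≥ d₁ · (∫ α dμ) / 2. (Theorem 2, lower bound: expected robustness is at least inf(𝒟) times half the expected alignment.) -/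
open MeasureTheory

/-
Up to a null set, `E` is the disjoint union of `A` and `B`, and `T` transports `μ` on `A` to
`μ` on `B`; so every integral over `μ` becomes an integral over `A` of `f x + f (T x)`.
For `ρ` this integrand is `‖T x - x‖ * α x ≥ d₁ * α x`, while for the `T`-invariant `α` it is
`2 * α x`; comparing the two gives the bound.
-/

theorem MeasureTheory.MeasurePreserving.integral_comp_of_aestronglyMeasurable
    {X Y G : Type*} [MeasurableSpace X] [MeasurableSpace Y] [NormedAddCommGroup G]
    [NormedSpace ℝ G] {μ : Measure X} {ν : Measure Y} {T : X → Y} {g : Y → G}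
    (hT : MeasurePreserving T μ ν) (hg : AEStronglyMeasurable g ν) :
    ∫ x, g (T x) ∂μ = ∫ y, g y ∂ν := by
  rw [← hT.map_eq] at hg ⊢
  exact (integral_map hT.measurable.aemeasurable hg).symm

theorem MeasureTheory.integral_eq_setIntegral_add_setIntegral
    {X G : Type*} [MeasurableSpace X] [NormedAddCommGroup G] [NormedSpace ℝ G]
    {μ : Measure X} {A B : Set X} {f : X → G}
    (hAB : Disjoint A B) (hB : MeasurableSet B) (hcover : μ (A ∪ B)ᶜ = 0)
    (hf : Integrable f μ) :
    ∫ x, f x ∂μ = ∫ x in A, f x ∂μ + ∫ x in B, f x ∂μ := by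
  rw [← setIntegral_union hAB hB hf.integrableOn hf.integrableOn,
    setIntegral_congr_set (ae_eq_univ.mpr hcover), setIntegral_univ]

theorem MeasureTheory.integral_eq_setIntegral_add_comp
    {X G : Type*} [MeasurableSpace X] [NormedAddCommGroup G] [NormedSpace ℝ G]
    {μ : Measure X} {A B : Set X} {T : X → X} {f : X → G}
    (hAB : Disjoint A B) (hB : MeasurableSet B) (hcover : μ (A ∪ B)ᶜ = 0)
    (hT : MeasurePreserving T (μ.restrict A) (μ.restrict B)) (hf : Integrable f μ) :
    ∫ x, f x ∂μ = ∫ x in A, (f x + f (T x)) ∂μ := by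
  rw [integral_eq_setIntegral_add_setIntegral hAB hB hcover hf,
    integral_add hf.integrableOn (g := fun x ↦ f (T x))
      (hT.integrable_comp_of_integrable hf.restrict),
    hT.integral_comp_of_aestronglyMeasurable hf.aestronglyMeasurable.restrict]

theorem MeasureTheory.measure_compl_union_eq_zero_of_add_eq_one
    {X : Type*} [MeasurableSpace X] {μ : Measure X} [IsProbabilityMeasure μ] {A B : Set X}
    (hA : MeasurableSet A) (hB : MeasurableSet B) (hAB : Disjoint A B) (hμ : μ A + μ B = 1) :
    μ (A ∪ B)ᶜ = 0 := by
  rwa [prob_compl_eq_zero_iff (hA.union hB), measure_union hAB hB]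

theorem theorem2_lower_bound_general {E : Type*} [NormedAddCommGroup E]
    [MeasurableSpace E]
    (μ : Measure E) [IsProbabilityMeasure μ]
    (A B : Set E) (hA : MeasurableSet A) (hB : MeasurableSet B)
    (hdisj : Disjoint A B) (hAB : μ A + μ B = 1)
    (T : E → E) (hT : Measurable T)
    (hmap : Measure.map T (μ.restrict A) = μ.restrict B)
    (ρ α : E → ℝ) (hρ : Integrable ρ μ) (hα : Integrable α μ)
    (d₁ : ℝ)
    (hpair : ∀ x ∈ A, ρ x + ρ (T x) = ‖T x - x‖ * α x)
    (hαT : ∀ x ∈ A, α (T x) = α x)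
    (hαpos : ∀ x ∈ A, 0 ≤ α x)
    (hdist : ∀ x ∈ A, d₁ ≤ ‖T x - x‖) :
    ∫ x, ρ x ∂μ ≥ d₁ * (∫ x, α x ∂μ) / 2 := by
  have hcover := measure_compl_union_eq_zero_of_add_eq_one hA hB hdisj hAB
  have hTA : MeasurePreserving T (μ.restrict A) (μ.restrict B) := ⟨hT, hmap⟩
  have hρ_pair : IntegrableOn (fun x ↦ ρ x + ρ (T x)) A μ :=
    hρ.integrableOn.add (hTA.integrable_comp_of_integrable hρ.restrict)
  have hρ_eq : ∫ x, ρ x ∂μ = ∫ x in A, ‖T x - x‖ * α x ∂μ :=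
    (integral_eq_setIntegral_add_comp hdisj hB hcover hTA hρ).trans
      (setIntegral_congr_fun hA hpair)
  have hα_eq : ∫ x, α x ∂μ = 2 * ∫ x in A, α x ∂μ := by
    rw [integral_eq_setIntegral_add_comp hdisj hB hcover hTA hα, ← integral_const_mul]
    refine setIntegral_congr_fun hA fun x hx ↦ ?_
    simp only [hαT x hx]
    ring
  have hmono : ∫ x in A, d₁ * α x ∂μ ≤ ∫ x in A, ‖T x - x‖ * α x ∂μ :=
    setIntegral_mono_on (hα.integrableOn.const_mul d₁)
      (hρ_pair.congr_fun hpair hA) hA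
      fun x hx ↦ mul_le_mul_of_nonneg_right (hdist x hx) (hαpos x hx)
  rw [integral_const_mul] at hmono
  rw [hρ_eq, hα_eq]
  linarith

/-- Theorem 2, lower bound: given a measure-preserving pairing `T` between the supports
`A` and `B` of the two classes, with pointwise robustness `ρ` and alignment `α`
satisfying `ρ x + ρ (T x) = ‖T x − x‖ · α x`, `α (T x) = α x`, `α x ≥ 0`, and
`‖T x − x‖ ≥ d₁` on `A`, the expected robustness is at least `d₁ · (∫ α) / 2`. -/
theorem theorem2_lower_bound {E : Type*} [NormedAddCommGroup E] [NormedSpace ℝ E]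
    [MeasurableSpace E] [BorelSpace E]
    (μ : Measure E) [IsProbabilityMeasure μ]
    (A B : Set E) (hA : MeasurableSet A) (hB : MeasurableSet B)
    (hdisj : Disjoint A B) (hAB : μ A + μ B = 1)
    (T : E → E) (hT : Measurable T)
    (hmap : Measure.map T (μ.restrict A) = μ.restrict B)
    (ρ α : E → ℝ) (hρ : Integrable ρ μ) (hα : Integrable α μ)
    (d₁ : ℝ) (hd₁ : 0 ≤ d₁)
    (hpair : ∀ x ∈ A, ρ x + ρ (T x) = ‖T x - x‖ * α x)
    (hαT : ∀ x ∈ A, α (T x) = α x)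
    (hαpos : ∀ x ∈ A, 0 ≤ α x)
    (hdist : ∀ x ∈ A, d₁ ≤ ‖T x - x‖) :
    ∫ x, ρ x ∂μ ≥ d₁ * (∫ x, α x ∂μ) / 2 :=
  theorem2_lower_bound_general μ A B hA hB hdisj hAB T hT hmap ρ α hρ hα d₁ hpair hαT hαpos hdist
end

section
/- Let E be a real normed vector space with its Borel σ-algebra, μ a probability measure on E, and A, B disjoint measurable subsets with μ(A) + μ(B) = 1. Let T : E → E be measurable with (μ restricted to A) pushed forward by T equal to μ restricted to B. Let ρ, α : E → ℝ be μ-integrable and d ≥ 0. Assume for every x ∈ A: ρ(x) + ρ(T x) = ‖T x − x‖ · α(x), α(T x) = α(x), and ‖T x − x‖ = d (the distance between paired points is constant). Then ∫ ρ dμ = d · (∫ α dμ) / 2. (The equality form of Theorem 2 used for the Spheres dataset, where both bounds combine to ρ_m = ‖Δx‖ · ᾱ / 2.) -/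
/-! All of the mass of `μ` sits on `A ∪ B`, and `T` carries `μ|_A` onto `μ|_B`, so
`∫ f dμ = ∫_A (f + f ∘ T) dμ` for every integrable `f`. For `f = ρ` the integrand is `d · α`
by the pairing identity; for `f = α` it is `2 α` by the invariance of `α` under `T`. -/

open MeasureTheory

namespace MeasureTheory

variable {X G : Type*} [MeasurableSpace X] [NormedAddCommGroup G]
  {μ : Measure X} {A B : Set X} {T : X → X}

theorem Measure.restrict_union_eq_self_of_measure_add_eq_one [IsProbabilityMeasure μ]
    (hA : MeasurableSet A) (hB : MeasurableSet B) (hdisj : Disjoint A B)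
    (hAB : μ A + μ B = 1) : μ.restrict (A ∪ B) = μ := by
  refine Measure.restrict_eq_self_of_ae_mem <|
    (ae_iff_measure_eq (p := (· ∈ A ∪ B)) (hA.union hB).nullMeasurableSet).2 ?_
  rw [Set.ofPred_mem_eq, measure_union hdisj hB, hAB, measure_univ]

theorem setIntegral_eq_setIntegral_comp_of_map_restrict [NormedSpace ℝ G]
    (hT : AEMeasurable T (μ.restrict A)) (hmap : (μ.restrict A).map T = μ.restrict B)
    {f : X → G} (hf : IntegrableOn f B μ) :
    ∫ x in B, f x ∂μ = ∫ x in A, f (T x) ∂μ := by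
  rw [← hmap, integral_map hT (hmap ▸ hf.aestronglyMeasurable)]

theorem integrableOn_comp_of_map_restrict
    (hT : AEMeasurable T (μ.restrict A)) (hmap : (μ.restrict A).map T = μ.restrict B)
    {f : X → G} (hf : IntegrableOn f B μ) :
    IntegrableOn (fun x ↦ f (T x)) A μ :=
  (hmap ▸ hf : Integrable f ((μ.restrict A).map T)).comp_aemeasurable hT

theorem integral_eq_setIntegral_add_comp_s8 [NormedSpace ℝ G] [IsProbabilityMeasure μ]
    (hA : MeasurableSet A) (hB : MeasurableSet B) (hdisj : Disjoint A B)
    (hAB : μ A + μ B = 1) (hT : AEMeasurable T (μ.restrict A))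
    (hmap : (μ.restrict A).map T = μ.restrict B) {f : X → G} (hf : Integrable f μ) :
    ∫ x, f x ∂μ = ∫ x in A, (f x + f (T x)) ∂μ := by
  rw [integral_add hf.integrableOn (integrableOn_comp_of_map_restrict hT hmap hf.integrableOn),
    ← setIntegral_eq_setIntegral_comp_of_map_restrict hT hmap hf.integrableOn,
    ← setIntegral_union hdisj hB hf.integrableOn hf.integrableOn,
    Measure.restrict_union_eq_self_of_measure_add_eq_one hA hB hdisj hAB]

end MeasureTheory

theorem theorem2_equality_general {E : Type*} [NormedAddCommGroup E]
    [MeasurableSpace E]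
    (μ : Measure E) [IsProbabilityMeasure μ]
    (A B : Set E) (hA : MeasurableSet A) (hB : MeasurableSet B)
    (hdisj : Disjoint A B) (hAB : μ A + μ B = 1)
    (T : E → E) (hT : Measurable T)
    (hmap : Measure.map T (μ.restrict A) = μ.restrict B)
    (ρ α : E → ℝ) (hρ : Integrable ρ μ) (hα : Integrable α μ)
    (d : ℝ)
    (hpair : ∀ x ∈ A, ρ x + ρ (T x) = ‖T x - x‖ * α x)
    (hαT : ∀ x ∈ A, α (T x) = α x)
    (hdist : ∀ x ∈ A, ‖T x - x‖ = d) :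
    ∫ x, ρ x ∂μ = d * (∫ x, α x ∂μ) / 2 := by
  have hsplit {f : E → ℝ} (hf : Integrable f μ) :=
    integral_eq_setIntegral_add_comp_s8 hA hB hdisj hAB hT.aemeasurable hmap hf
  have hρA : ∫ x in A, (ρ x + ρ (T x)) ∂μ = ∫ x in A, d * α x ∂μ :=
    setIntegral_congr_fun hA fun x hx ↦ by rw [hpair x hx, hdist x hx]
  have hαA : ∫ x in A, (α x + α (T x)) ∂μ = ∫ x in A, 2 * α x ∂μ :=
    setIntegral_congr_fun hA fun x hx ↦ by rw [hαT x hx, two_mul]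
  rw [hsplit hρ, hsplit hα, hρA, hαA, integral_const_mul, integral_const_mul]
  ring

/-- The equality form of Theorem 2 used for the Spheres dataset: when the distance
between paired points is the constant `d`, the expected robustness equals
`d · (∫ α) / 2`, i.e. `ρ_m = ‖Δx‖ · ᾱ / 2`. -/
theorem theorem2_equality {E : Type*} [NormedAddCommGroup E] [NormedSpace ℝ E]
    [MeasurableSpace E] [BorelSpace E]
    (μ : Measure E) [IsProbabilityMeasure μ]
    (A B : Set E) (hA : MeasurableSet A) (hB : MeasurableSet B)
    (hdisj : Disjoint A B) (hAB : μ A + μ B = 1)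
    (T : E → E) (hT : Measurable T)
    (hmap : Measure.map T (μ.restrict A) = μ.restrict B)
    (ρ α : E → ℝ) (hρ : Integrable ρ μ) (hα : Integrable α μ)
    (d : ℝ) (hd : 0 ≤ d)
    (hpair : ∀ x ∈ A, ρ x + ρ (T x) = ‖T x - x‖ * α x)
    (hαT : ∀ x ∈ A, α (T x) = α x)
    (hdist : ∀ x ∈ A, ‖T x - x‖ = d) :
    ∫ x, ρ x ∂μ = d * (∫ x, α x ∂μ) / 2 :=
  theorem2_equality_general μ A B hA hB hdisj hAB T hT hmap ρ α hρ hα d hpair hαT hdist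
end

section
/- Let E be a real normed vector space, let 0 < r₁ ≤ t ≤ r₂, and consider the threshold classifier that assigns class 1 to v when ‖v‖ > t and class −1 when ‖v‖ < t. Then: (a) for every x ∈ E with ‖x‖ = r₁, the robustness inf{‖δ‖ : ‖x + δ‖ ≥ t} equals t − r₁; (b) for every x' ∈ E with ‖x'‖ = r₂, the robustness inf{‖δ‖ : ‖x' + δ‖ ≤ t} equals r₂ − t; and hence (c) the expected robustness under equal class priors, (1/2)(t − r₁) + (1/2)(r₂ − t), equals (r₂ − r₁)/2, independently of t. In particular, for the Spheres dataset with r₁ = 1 and r₂ = 1.3 the expected robustness of every such threshold classifier is 0.15. -/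
/-! Both robustness values come from the reverse triangle inequality `|‖x + δ‖ - ‖x‖| ≤ ‖δ‖`,
which is attained by moving `x` radially, `δ = (s / ‖x‖ - 1) • x`, onto the sphere of
radius `s = t`. -/

section RadialPerturbation

variable {E : Type*} [NormedAddCommGroup E] [NormedSpace ℝ E]

theorem exists_norm_add_eq_and_norm_eq_abs_sub {x : E} (hx : x ≠ 0) {s : ℝ} (hs : 0 ≤ s) :
    ∃ δ : E, ‖x + δ‖ = s ∧ ‖δ‖ = |s - ‖x‖| := by
  have hnx : 0 < ‖x‖ := norm_pos_iff.mpr hx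
  refine ⟨(s / ‖x‖ - 1) • x, ?_, ?_⟩
  · have hsum : x + (s / ‖x‖ - 1) • x = (s / ‖x‖) • x := by
      rw [sub_smul, one_smul, add_sub_cancel]
    rw [hsum, norm_smul, Real.norm_of_nonneg (div_nonneg hs hnx.le), div_mul_cancel₀ s hnx.ne']
  · rw [norm_smul, Real.norm_eq_abs, ← abs_of_pos hnx, ← abs_mul, abs_of_pos hnx, sub_mul,
      div_mul_cancel₀ s hnx.ne', one_mul]

theorem isLeast_norm_perturbation_outward {x : E} (hx : x ≠ 0) {t : ℝ} (ht : ‖x‖ ≤ t) :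
    IsLeast {r : ℝ | ∃ δ : E, ‖x + δ‖ ≥ t ∧ ‖δ‖ = r} (t - ‖x‖) := by
  refine ⟨?_, ?_⟩
  · obtain ⟨δ, hδt, hδ⟩ :=
      exists_norm_add_eq_and_norm_eq_abs_sub hx ((norm_nonneg x).trans ht)
    exact ⟨δ, hδt.ge, by rw [hδ, abs_of_nonneg (sub_nonneg.mpr ht)]⟩
  · rintro r ⟨δ, hδt, rfl⟩
    linarith [norm_add_le x δ]

theorem isLeast_norm_perturbation_inward {x : E} (hx : x ≠ 0) {t : ℝ} (ht₀ : 0 ≤ t)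
    (ht : t ≤ ‖x‖) :
    IsLeast {r : ℝ | ∃ δ : E, ‖x + δ‖ ≤ t ∧ ‖δ‖ = r} (‖x‖ - t) := by
  refine ⟨?_, ?_⟩
  · obtain ⟨δ, hδt, hδ⟩ := exists_norm_add_eq_and_norm_eq_abs_sub hx ht₀
    exact ⟨δ, hδt.le, by rw [hδ, abs_sub_comm, abs_of_nonneg (sub_nonneg.mpr ht)]⟩
  · rintro r ⟨δ, hδt, rfl⟩
    have h := norm_sub_le (x + δ) δ
    rw [add_sub_cancel_right] at h
    linarith

end RadialPerturbation

/-- For the Spheres dataset with a threshold classifier at `t` (class 1 when `‖v‖ > t`,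
class −1 when `‖v‖ < t`), with `0 < r₁ ≤ t ≤ r₂`:
(a) the robustness of any point on the inner sphere of radius `r₁` is `t − r₁`;
(b) the robustness of any point on the outer sphere of radius `r₂` is `r₂ − t`;
(c) hence the expected robustness under equal class priors is `(r₂ − r₁)/2`,
independently of `t`. -/
theorem spheres_threshold_robustness {E : Type*} [NormedAddCommGroup E] [NormedSpace ℝ E]
    (r₁ r₂ t : ℝ) (h₁ : 0 < r₁) (h₂ : r₁ ≤ t) (h₃ : t ≤ r₂) :
    (∀ x : E, ‖x‖ = r₁ → sInf {r : ℝ | ∃ δ : E, ‖x + δ‖ ≥ t ∧ ‖δ‖ = r} = t - r₁) ∧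
    (∀ x' : E, ‖x'‖ = r₂ → sInf {r : ℝ | ∃ δ : E, ‖x' + δ‖ ≤ t ∧ ‖δ‖ = r} = r₂ - t) ∧
    (1 / 2) * (t - r₁) + (1 / 2) * (r₂ - t) = (r₂ - r₁) / 2 := by
  refine ⟨fun x hx => ?_, fun x hx => ?_, by ring⟩
  · subst hx
    exact (isLeast_norm_perturbation_outward (norm_pos_iff.mp h₁) h₂).csInf_eq
  · subst hx
    exact (isLeast_norm_perturbation_inward (norm_pos_iff.mp (h₁.trans_le (h₂.trans h₃)))
      (h₁.le.trans h₂) h₃).csInf_eq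
end
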